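/- Let G1 be an r1-regular graph with n1 vertices (r1 ≥ 1) and G2 an r2-regular graph (r2 ≥ 1), G3 an r3-regular graph (r3 ≥ 1), and let 𝒢 = G1^S ⋈ (G2^V ∪ G3^E). If μ ≠ 0 is an eigenvalue of 𝓛(G2) with multiplicity k, then (r1 + r2·μ)/(r1 + r2) is an eigenvalue of 𝓛(𝒢) with multiplicity at least n1·k (equivalently, ((X − (r1+r2·μ)/(r1+r2))^{n1·k} divides the characteristic polynomial of 𝓛(𝒢)). -/

import Mathlib

/-!
Let `y` be a `μ`-eigenvector of `𝓛(G2)` with `μ ≠ 0`. Regularity turns the eigen-equation into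
`A(G2) y = r2 (1 - μ) y`, and `y` is orthogonal to the all-ones vector, i.e. `∑ y = 0`.
Put `y` on the `i`-th copy of `G2` and `0` elsewhere. An inserted vertex `e` sees the sums of `y`
over the copies at the ends of `e`, which vanish; a vertex of a copy has degree `r1 + r2` and sees
`A(G2) y`. Hence the extended vector is an eigenvector of `𝓛(𝒢)` with eigenvalue
`1 - r2 (1 - μ) / (r1 + r2) = (r1 + r2 μ) / (r1 + r2)`. Doing this on all copies at once embeds
`n1` copies of the `μ`-eigenspace of `𝓛(G2)` into this eigenspace of `𝓛(𝒢)`. Both matrices are symmetric, so the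
dimension of an eigenspace is the multiplicity of the eigenvalue as a root of the
characteristic polynomial.
-/

open Matrix Polynomial BigOperators Kronecker

namespace NLS

variable {V : Type*}

/-- Adjacency matrix over `ℝ` (classical decidability). -/
noncomputable def adjMat (G : SimpleGraph V) : Matrix V V ℝ :=
  letI := Classical.decRel G.Adj
  G.adjMatrix ℝ

/-- Degree of a vertex (classical decidability). -/
noncomputable def deg [Fintype V] (G : SimpleGraph V) (v : V) : ℕ :=
  letI := Classical.decRel G.Adj
  G.degree v

/-- The normalized Laplacian `I - D^{-1/2} A D^{-1/2}`. -/
noncomputable def normLap [Fintype V] (G : SimpleGraph V) : Matrix V V ℝ :=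
  letI := Classical.decEq V
  1 - (Matrix.diagonal fun v => (Real.sqrt (deg G v))⁻¹) * adjMat G *
      (Matrix.diagonal fun v => (Real.sqrt (deg G v))⁻¹)

/-- `G` is `r`-regular. -/
def IsReg [Fintype V] (G : SimpleGraph V) (r : ℕ) : Prop := ∀ v, deg G v = r

/-- Vertex-edge incidence matrix over `ℝ`. -/
def incMat [DecidableEq V] (G : SimpleGraph V) : Matrix V G.edgeSet ℝ :=
  Matrix.of fun v e => if v ∈ (e : Sym2 V) then 1 else 0

/-- The number of spanning trees of `G`. -/
noncomputable def numSpanningTrees [Fintype V] (G : SimpleGraph V) : ℕ :=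
  Nat.card {H : SimpleGraph V // H ≤ G ∧ H.IsTree}

section Corona

variable {V1 V2 V3 : Type*}

/-- Adjacency for the subdivision vertex-edge neighbourhood **vertex**-corona
`G1^S ⋈ (G2^V ∪ G3^E)`. Vertices: original `V1`, inserted `G1.edgeSet`,
copies of `G2` indexed by `V1`, copies of `G3` indexed by `G1.edgeSet`. -/
def svevAdj (G1 : SimpleGraph V1) (G2 : SimpleGraph V2) (G3 : SimpleGraph V3) :
    (V1 ⊕ (G1.edgeSet ⊕ ((V1 × V2) ⊕ (G1.edgeSet × V3)))) →
    (V1 ⊕ (G1.edgeSet ⊕ ((V1 × V2) ⊕ (G1.edgeSet × V3)))) → Prop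
  | .inl v, .inr (.inl e) => v ∈ (e : Sym2 V1)
  | .inr (.inl e), .inl v => v ∈ (e : Sym2 V1)
  | .inr (.inl e), .inr (.inr (.inl p)) => p.1 ∈ (e : Sym2 V1)
  | .inr (.inr (.inl p)), .inr (.inl e) => p.1 ∈ (e : Sym2 V1)
  | .inr (.inl e), .inr (.inr (.inr q)) => q.1 = e
  | .inr (.inr (.inr q)), .inr (.inl e) => q.1 = e
  | .inr (.inr (.inl p)), .inr (.inr (.inl p')) => p.1 = p'.1 ∧ G2.Adj p.2 p'.2
  | .inr (.inr (.inr q)), .inr (.inr (.inr q')) => q.1 = q'.1 ∧ G3.Adj q.2 q'.2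
  | _, _ => False

/-- The subdivision vertex-edge neighbourhood vertex-corona `G1^S ⋈ (G2^V ∪ G3^E)`. -/
def svev (G1 : SimpleGraph V1) (G2 : SimpleGraph V2) (G3 : SimpleGraph V3) :
    SimpleGraph (V1 ⊕ (G1.edgeSet ⊕ ((V1 × V2) ⊕ (G1.edgeSet × V3)))) where
  Adj := svevAdj G1 G2 G3
  symm := by
    constructor
    rintro (v|e|p|q) (v'|e'|p'|q') h <;>
      first
        | exact h
        | exact ⟨h.1.symm, h.2.symm⟩
        | exact h.elim
  loopless := by
    constructor
    rintro (v|e|p|q) h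
    · exact h
    · exact h
    · exact G2.loopless.irrefl _ h.2
    · exact G3.loopless.irrefl _ h.2

/-- Adjacency for the subdivision vertex-edge neighbourhood **edge**-corona
`G1^S ◊ (G2^V ∪ G3^E)`. Vertices: original `V1`, inserted `G1.edgeSet`,
copies of `G2` indexed by `G1.edgeSet`, copies of `G3` indexed by `V1`. -/
def sveeAdj (G1 : SimpleGraph V1) (G2 : SimpleGraph V2) (G3 : SimpleGraph V3) :
    (V1 ⊕ (G1.edgeSet ⊕ ((G1.edgeSet × V2) ⊕ (V1 × V3)))) →
    (V1 ⊕ (G1.edgeSet ⊕ ((G1.edgeSet × V2) ⊕ (V1 × V3)))) → Prop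
  | .inl v, .inr (.inl e) => v ∈ (e : Sym2 V1)
  | .inr (.inl e), .inl v => v ∈ (e : Sym2 V1)
  | .inl v, .inr (.inr (.inl p)) => v ∈ (p.1 : Sym2 V1)
  | .inr (.inr (.inl p)), .inl v => v ∈ (p.1 : Sym2 V1)
  | .inl v, .inr (.inr (.inr q)) => q.1 = v
  | .inr (.inr (.inr q)), .inl v => q.1 = v
  | .inr (.inr (.inl p)), .inr (.inr (.inl p')) => p.1 = p'.1 ∧ G2.Adj p.2 p'.2
  | .inr (.inr (.inr q)), .inr (.inr (.inr q')) => q.1 = q'.1 ∧ G3.Adj q.2 q'.2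
  | _, _ => False

/-- The subdivision vertex-edge neighbourhood edge-corona `G1^S ◊ (G2^V ∪ G3^E)`. -/
def svee (G1 : SimpleGraph V1) (G2 : SimpleGraph V2) (G3 : SimpleGraph V3) :
    SimpleGraph (V1 ⊕ (G1.edgeSet ⊕ ((G1.edgeSet × V2) ⊕ (V1 × V3)))) where
  Adj := sveeAdj G1 G2 G3
  symm := by
    constructor
    rintro (v|e|p|q) (v'|e'|p'|q') h <;>
      first
        | exact h
        | exact ⟨h.1.symm, h.2.symm⟩
        | exact h.elim
  loopless := by
    constructor
    rintro (v|e|p|q) h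
    · exact h
    · exact h
    · exact G2.loopless.irrefl _ h.2
    · exact G3.loopless.irrefl _ h.2

end Corona

open Module Module.End

section Hermitian

variable {𝕜 n : Type*} [RCLike 𝕜] [Fintype n] [DecidableEq n]

theorem _root_.Matrix.IsHermitian.finrank_eigenspace_toLin' {A : Matrix n n 𝕜}
    (hA : A.IsHermitian) (μ : 𝕜) :
    finrank 𝕜 (eigenspace (toLin' A) μ) = A.charpoly.rootMultiplicity μ := by
  have hmap : (eigenspace (toEuclideanLin A) μ).map (WithLp.linearEquiv 2 𝕜 (n → 𝕜)).toLinearMap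
      = eigenspace (toLin' A) μ := by
    ext x
    simp [Submodule.mem_map_equiv, ← WithLp.toLp_smul]
  rw [← hmap, LinearEquiv.finrank_map_eq,
    ← (isSymmetric_toEuclideanLin_iff.mpr hA).isFinitelySemisimple.maxGenEigenspace_eq_eigenspace,
    LinearMap.finrank_maxGenEigenspace_eq, toEuclideanLin_eq_toLin_orthonormal, charpoly_toLin]

theorem _root_.Matrix.IsHermitian.pow_dvd_charpoly_iff {A : Matrix n n 𝕜} (hA : A.IsHermitian)
    {μ : 𝕜} {k : ℕ} :
    (X - C μ) ^ k ∣ A.charpoly ↔ k ≤ finrank 𝕜 (eigenspace (toLin' A) μ) := by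
  rw [hA.finrank_eigenspace_toLin', le_rootMultiplicity_iff A.charpoly_monic.ne_zero]

end Hermitian

section Graph

variable {V : Type*} (G : SimpleGraph V)

lemma adjMat_eq_adjMatrix [DecidableRel G.Adj] : adjMat G = G.adjMatrix ℝ := by
  unfold adjMat
  congr

lemma adjMat_apply [DecidableRel G.Adj] (v w : V) :
    adjMat G v w = if G.Adj v w then 1 else 0 := by
  rw [adjMat_eq_adjMatrix, SimpleGraph.adjMatrix_apply]

lemma isSymm_adjMat : (adjMat G).IsSymm := by
  classical
  rw [adjMat_eq_adjMatrix]
  exact G.isSymm_adjMatrix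

variable [Fintype V]

lemma deg_eq_degree [DecidableRel G.Adj] (v : V) : deg G v = G.degree v := by
  unfold deg
  convert rfl

lemma natCast_deg_eq_sum_adjMat (v : V) : (deg G v : ℝ) = ∑ w, adjMat G v w := by
  classical
  simpa [adjMat_eq_adjMatrix, deg_eq_degree, mulVec, dotProduct] using
    (G.adjMatrix_mulVec_const_apply (a := (1 : ℝ)) (v := v)).symm

lemma sum_incMat_apply [DecidableEq V] [Fintype G.edgeSet] (v : V) :
    ∑ e, incMat G v e = (deg G v : ℝ) := by
  classical
  simp only [incMat, of_apply, Finset.sum_boole]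
  rw [deg_eq_degree, ← G.card_incidenceSet_eq_degree, ← Fintype.card_subtype]
  exact congrArg _ <| Fintype.card_congr <|
    Equiv.subtypeSubtypeEquivSubtypeInter (· ∈ G.edgeSet) (v ∈ ·)

lemma isHermitian_normLap : (normLap G).IsHermitian := by
  classical
  unfold normLap
  refine isHermitian_one.sub ?_
  have h := isHermitian_mul_mul_conjTranspose (diagonal fun v => (√(deg G v))⁻¹)
    (isHermitian_iff_isSymm.mpr (isSymm_adjMat G))
  rwa [(isHermitian_diagonal _).eq] at h

lemma normLap_mulVec (x : V → ℝ) :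
    normLap G *ᵥ x =
      x - (fun v => (√(deg G v))⁻¹) * (adjMat G *ᵥ ((fun v => (√(deg G v))⁻¹) * x)) := by
  classical
  have hdiag (d y : V → ℝ) : diagonal d *ᵥ y = d * y := funext (mulVec_diagonal d y)
  simp only [normLap, sub_mulVec, one_mulVec, ← mulVec_mulVec, hdiag]

variable {G}

lemma inv_sqrt_deg_mul_eq_smul {d : ℕ} {x : V → ℝ} (hx : ∀ v, x v ≠ 0 → deg G v = d) :
    (fun v => (√(deg G v))⁻¹) * x = (√(d : ℝ))⁻¹ • x := by
  funext v
  by_cases hv : x v = 0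
  · simp [hv]
  · simp [hx v hv]

lemma normLap_mulVec_of_deg_eq {d : ℕ} {x : V → ℝ} (hx : ∀ v, x v ≠ 0 → deg G v = d)
    (hAx : ∀ v, (adjMat G *ᵥ x) v ≠ 0 → deg G v = d) :
    normLap G *ᵥ x = x - (d : ℝ)⁻¹ • (adjMat G *ᵥ x) := by
  rw [normLap_mulVec, inv_sqrt_deg_mul_eq_smul hx, mulVec_smul, mul_smul_comm,
    inv_sqrt_deg_mul_eq_smul hAx, smul_smul, ← mul_inv, Real.mul_self_sqrt d.cast_nonneg]

lemma normLap_mulVec_of_adjMat_mulVec {d : ℕ} {t : ℝ} {x : V → ℝ}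
    (hx : ∀ v, x v ≠ 0 → deg G v = d) (hA : adjMat G *ᵥ x = t • x) :
    normLap G *ᵥ x = (1 - t / d) • x := by
  have hAx (v : V) (hv : (adjMat G *ᵥ x) v ≠ 0) : deg G v = d := by
    rw [hA, Pi.smul_apply, smul_eq_mul] at hv
    exact hx v (right_ne_zero_of_mul hv)
  rw [normLap_mulVec_of_deg_eq hx hAx, hA, smul_smul, sub_smul, one_smul, div_eq_inv_mul]

variable {r : ℕ}

lemma normLap_mulVec_of_isReg (hG : IsReg G r) (x : V → ℝ) :
    normLap G *ᵥ x = x - (r : ℝ)⁻¹ • (adjMat G *ᵥ x) :=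
  normLap_mulVec_of_deg_eq (fun v _ => hG v) (fun v _ => hG v)

lemma adjMat_mulVec_one_of_isReg (hG : IsReg G r) : adjMat G *ᵥ 1 = (r : ℝ) • 1 := by
  funext v
  simp [mulVec, dotProduct, ← natCast_deg_eq_sum_adjMat, hG v]

variable {μ : ℝ} {y : V → ℝ}

lemma adjMat_mulVec_of_normLap_mulVec (hG : IsReg G r) (hr : r ≠ 0)
    (hy : normLap G *ᵥ y = μ • y) : adjMat G *ᵥ y = ((r : ℝ) * (1 - μ)) • y := by
  have h : (r : ℝ)⁻¹ • (adjMat G *ᵥ y) = (1 - μ) • y := by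
    rw [sub_smul, one_smul, ← hy, normLap_mulVec_of_isReg hG, sub_sub_cancel]
  rw [mul_smul, ← h, smul_inv_smul₀ (Nat.cast_ne_zero.mpr hr)]

lemma sum_eq_zero_of_normLap_mulVec (hG : IsReg G r) (hr : r ≠ 0) (hμ : μ ≠ 0)
    (hy : normLap G *ᵥ y = μ • y) : ∑ v, y v = 0 := by
  have h : (1 : V → ℝ) ⬝ᵥ (adjMat G *ᵥ y) = (adjMat G *ᵥ 1) ⬝ᵥ y := by
    rw [dotProduct_mulVec, ← mulVec_transpose, isSymm_adjMat G]
  rw [adjMat_mulVec_of_normLap_mulVec hG hr hy, adjMat_mulVec_one_of_isReg hG, dotProduct_smul,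
    smul_dotProduct, one_dotProduct, smul_eq_mul, smul_eq_mul] at h
  have hrμ : (r : ℝ) * μ ≠ 0 := mul_ne_zero (Nat.cast_ne_zero.mpr hr) hμ
  exact (mul_eq_zero.mp (by linear_combination -h : (r : ℝ) * μ * ∑ v, y v = 0)).resolve_left hrμ

end Graph

section Corona

variable {V1 V2 V3 : Type*} {G1 : SimpleGraph V1} {G2 : SimpleGraph V2} {G3 : SimpleGraph V3}

/- In lemma names, the four kinds of vertices of `svev G1 G2 G3` are `vertex` (`V1`), `inserted`
(`G1.edgeSet`), `vCopy` (`V1 × V2`, the copies of `G2`) and `eCopy` (`G1.edgeSet × V3`). -/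

def vCopyExtend (G1 : SimpleGraph V1) :
    (V1 → V2 → ℝ) →ₗ[ℝ] (V1 ⊕ (G1.edgeSet ⊕ ((V1 × V2) ⊕ (G1.edgeSet × V3))) → ℝ) where
  toFun f
    | .inr (.inr (.inl p)) => f p.1 p.2
    | _ => 0
  map_add' f g := by funext w; rcases w with v | e | p | q <;> simp
  map_smul' c f := by funext w; rcases w with v | e | p | q <;> simp

lemma vCopyExtend_injective : Function.Injective (vCopyExtend (V2 := V2) (V3 := V3) G1) :=
  fun _ _ h => funext fun i => funext fun u => congrFun h (.inr (.inr (.inl (i, u))))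

lemma adjMat_svev_vertex_vCopy (v : V1) (p : V1 × V2) :
    adjMat (svev G1 G2 G3) (.inl v) (.inr (.inr (.inl p))) = 0 := by
  classical
  exact (adjMat_apply _ _ _).trans (if_neg id)

lemma adjMat_svev_eCopy_vCopy (q : G1.edgeSet × V3) (p : V1 × V2) :
    adjMat (svev G1 G2 G3) (.inr (.inr (.inr q))) (.inr (.inr (.inl p))) = 0 := by
  classical
  exact (adjMat_apply _ _ _).trans (if_neg id)

variable [DecidableEq V1]

lemma adjMat_svev_inserted_vCopy (e : G1.edgeSet) (p : V1 × V2) :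
    adjMat (svev G1 G2 G3) (.inr (.inl e)) (.inr (.inr (.inl p))) =
      if p.1 ∈ (e : Sym2 V1) then 1 else 0 := by
  classical
  exact (adjMat_apply _ _ _).trans (if_congr Iff.rfl rfl rfl)

lemma adjMat_svev_vCopy_vCopy (p q : V1 × V2) :
    adjMat (svev G1 G2 G3) (.inr (.inr (.inl p))) (.inr (.inr (.inl q))) =
      if p.1 = q.1 then adjMat G2 p.2 q.2 else 0 := by
  classical
  rw [adjMat_apply, adjMat_apply]
  by_cases h : p.1 = q.1
  · rw [if_pos h]
    exact if_congr (and_iff_right h) rfl rfl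
  · rw [if_neg h]
    exact if_neg fun hpq => h hpq.1

variable [Fintype V1] [Fintype V2] [Fintype V3] [Fintype G1.edgeSet]

lemma deg_svev_vCopy (i : V1) (u : V2) :
    deg (svev G1 G2 G3) (.inr (.inr (.inl (i, u)))) = deg G1 i + deg G2 u := by
  rw [← Nat.cast_inj (R := ℝ), natCast_deg_eq_sum_adjMat, Nat.cast_add, ← sum_incMat_apply,
    natCast_deg_eq_sum_adjMat G2]
  simp only [fun w => (isSymm_adjMat (svev G1 G2 G3)).apply w (.inr (.inr (.inl (i, u)))),
    Fintype.sum_sum_type, Fintype.sum_prod_type, adjMat_svev_vertex_vCopy,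
    adjMat_svev_inserted_vCopy, adjMat_svev_vCopy_vCopy, adjMat_svev_eCopy_vCopy]
  simp [incMat, fun b => (isSymm_adjMat G2).apply b u]

lemma adjMat_svev_mulVec_vCopyExtend {t : ℝ} {f : V1 → V2 → ℝ}
    (hA : ∀ i, adjMat G2 *ᵥ f i = t • f i) (hsum : ∀ i, ∑ u, f i u = 0) :
    adjMat (svev G1 G2 G3) *ᵥ vCopyExtend G1 f = t • vCopyExtend G1 f := by
  have hrow (w) : (adjMat (svev G1 G2 G3) *ᵥ vCopyExtend G1 f) w =
      ∑ a, ∑ b, adjMat (svev G1 G2 G3) w (.inr (.inr (.inl (a, b)))) * f a b := by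
    simp [mulVec, dotProduct, Fintype.sum_sum_type, Fintype.sum_prod_type, vCopyExtend]
  funext w
  rw [hrow]
  rcases w with v | e | ⟨i, u⟩ | q
  · simp [adjMat_svev_vertex_vCopy, vCopyExtend]
  · simp [adjMat_svev_inserted_vCopy, vCopyExtend, hsum]
  · have h := congrFun (hA i) u
    simp only [Pi.smul_apply, smul_eq_mul, mulVec, dotProduct] at h
    simp [adjMat_svev_vCopy_vCopy, vCopyExtend, ← h]
  · simp [adjMat_svev_eCopy_vCopy, vCopyExtend]

variable {r1 r2 : ℕ} {μ : ℝ}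

lemma normLap_svev_mulVec_vCopyExtend (hr2 : r2 ≠ 0) (h1 : IsReg G1 r1) (h2 : IsReg G2 r2)
    (hμ : μ ≠ 0) {f : V1 → V2 → ℝ} (hf : ∀ i, normLap G2 *ᵥ f i = μ • f i) :
    normLap (svev G1 G2 G3) *ᵥ vCopyExtend G1 f =
      (((r1 : ℝ) + r2 * μ) / ((r1 : ℝ) + r2)) • vCopyExtend G1 f := by
  have hA := adjMat_svev_mulVec_vCopyExtend (G1 := G1) (G3 := G3)
    (fun i => adjMat_mulVec_of_normLap_mulVec h2 hr2 (hf i))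
    (fun i => sum_eq_zero_of_normLap_mulVec h2 hr2 hμ (hf i))
  have hdeg : ∀ w, vCopyExtend G1 f w ≠ 0 → deg (svev G1 G2 G3) w = r1 + r2 := by
    rintro (v | e | ⟨i, u⟩ | q) h
    · exact (h rfl).elim
    · exact (h rfl).elim
    · rw [deg_svev_vCopy, h1, h2]
    · exact (h rfl).elim
  rw [normLap_mulVec_of_adjMat_mulVec hdeg hA]
  have hd : (r1 : ℝ) + r2 ≠ 0 := by positivity
  congr 1
  field_simp
  push_cast
  ring

variable [DecidableEq V2] [DecidableEq V3]

lemma card_mul_finrank_eigenspace_normLap_le (hr2 : r2 ≠ 0) (h1 : IsReg G1 r1) (h2 : IsReg G2 r2)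
    (hμ : μ ≠ 0) :
    Fintype.card V1 * finrank ℝ (eigenspace (toLin' (normLap G2)) μ) ≤
      finrank ℝ (eigenspace (toLin' (normLap (svev G1 G2 G3)))
        (((r1 : ℝ) + r2 * μ) / ((r1 : ℝ) + r2))) := by
  set E := eigenspace (toLin' (normLap G2)) μ
  let φ := (vCopyExtend (V3 := V3) G1).comp (E.subtype.compLeft V1)
  have hφ (g : V1 → E) : φ g ∈ eigenspace (toLin' (normLap (svev G1 G2 G3)))
      (((r1 : ℝ) + r2 * μ) / ((r1 : ℝ) + r2)) := by
    rw [mem_eigenspace_iff, toLin'_apply]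
    exact normLap_svev_mulVec_vCopyExtend hr2 h1 h2 hμ fun i => mem_eigenspace_iff.mp (g i).2
  have hinj : Function.Injective (φ.codRestrict _ hφ) := fun _ _ h =>
    (vCopyExtend_injective.comp Subtype.val_injective.comp_left) (congrArg Subtype.val h)
  calc Fintype.card V1 * finrank ℝ E = finrank ℝ (V1 → E) := by
        rw [Module.finrank_pi_fintype, Finset.sum_const, Finset.card_univ, smul_eq_mul]
    _ ≤ _ := LinearMap.finrank_le_finrank_of_injective hinj

end Corona

theorem stmt_8_general {V1 V2 V3 : Type*} [Fintype V1] [DecidableEq V1]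
    [Fintype V2] [DecidableEq V2] [Fintype V3] [DecidableEq V3]
    (G1 : SimpleGraph V1) (G2 : SimpleGraph V2) (G3 : SimpleGraph V3)
    [Fintype G1.edgeSet]
    (r1 r2 : ℕ) (hr2 : 1 ≤ r2)
    (h1 : IsReg G1 r1) (h2 : IsReg G2 r2)
    (μ : ℝ) (hμ : μ ≠ 0) (k : ℕ)
    (hmult : (X - C μ) ^ k ∣ (normLap G2).charpoly) :
    (X - C (((r1 : ℝ) + r2 * μ) / ((r1 : ℝ) + r2))) ^ (Fintype.card V1 * k) ∣
      (normLap (svev G1 G2 G3)).charpoly := by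
  rw [(isHermitian_normLap G2).pow_dvd_charpoly_iff] at hmult
  rw [(isHermitian_normLap _).pow_dvd_charpoly_iff]
  exact (Nat.mul_le_mul_left _ hmult).trans
    (card_mul_finrank_eigenspace_normLap_le (by omega) h1 h2 hμ)

theorem stmt_8 {V1 V2 V3 : Type*} [Fintype V1] [DecidableEq V1]
    [Fintype V2] [DecidableEq V2] [Fintype V3] [DecidableEq V3]
    (G1 : SimpleGraph V1) (G2 : SimpleGraph V2) (G3 : SimpleGraph V3)
    [Fintype G1.edgeSet]
    (r1 r2 r3 : ℕ) (hr1 : 1 ≤ r1) (hr2 : 1 ≤ r2) (hr3 : 1 ≤ r3)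
    (h1 : IsReg G1 r1) (h2 : IsReg G2 r2) (h3 : IsReg G3 r3)
    (μ : ℝ) (hμ : μ ≠ 0) (k : ℕ)
    (hmult : (X - C μ) ^ k ∣ (normLap G2).charpoly) :
    (X - C (((r1 : ℝ) + r2 * μ) / ((r1 : ℝ) + r2))) ^ (Fintype.card V1 * k) ∣
      (normLap (svev G1 G2 G3)).charpoly :=
  stmt_8_general G1 G2 G3 r1 r2 hr2 h1 h2 μ hμ k hmult

end NLS
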